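/- Lemma 4.1. Assume the nonsingularity assumption. Then the Markov operator P of the model preserves absolute continuity with respect to ℓ̄: for every finite measure μ on X with μ ≪ ℓ̄, the measure Pμ is absolutely continuous with respect to ℓ̄; equivalently, for every measurable A ⊆ X with ℓ̄ A = 0 one has ∫⁻ x, P(x,A) ∂μ = 0. -/

import Mathlib

open MeasureTheory ENNReal ProbabilityTheory Filter

noncomputable section

/-- The one-step transition probability of the chain of post-jump locations. -/
def Ptrans {Y I' Θ : Type*} [MeasurableSpace Y] [Fintype I'] [MeasurableSpace Θ]
    (ϑ : Measure Θ) (Λ : ℝ)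
    (S : I' → ℝ → Y → Y) (w : Θ → Y → Y) (p : Θ → Y → ℝ) (π' : I' → I' → Y → ℝ)
    (x : Y × I') (A : Set (Y × I')) : ℝ≥0∞ :=
  ∑ j : I', ∫⁻ θ, (∫⁻ t in Set.Ioi (0:ℝ),
      ENNReal.ofReal (Λ * Real.exp (-(Λ*t))) *
      Set.indicator A (fun _ => (1:ℝ≥0∞)) (w θ (S x.2 t x.1), j) *
      ENNReal.ofReal (π' x.2 j (w θ (S x.2 t x.1))) *
      ENNReal.ofReal (p θ (S x.2 t x.1))) ∂ϑ

/-! The kernel `P(x, A)` integrates, against `ϑ ⊗ Leb|(0,∞)`, a function that vanishes unless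
the post-jump point `w θ (S i t y)` lands in the slice `A_j = {y | (y, j) ∈ A}`. If `A` is
`ℓ̄`-null, every slice `A_j` is Lebesgue-null, and by nonsingularity so is its preimage under
`y ↦ w θ (S i t y)` for each `(θ, t)`. Tonelli lets us exchange the two "almost every"
quantifiers, so for a.e. `y` the integrand vanishes for a.e. `(θ, t)`; hence `P(·, A)` is
`ℓ̄`-a.e. zero and integrates to zero against every `μ ≪ ℓ̄`. -/

namespace MeasureTheory

theorem ae_prod_count_iff {α ι : Type*} [MeasurableSpace α] [MeasurableSpace ι] [Countable ι]
    [MeasurableSingletonClass ι] (μ : Measure α) {q : α × ι → Prop} :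
    (∀ᵐ x ∂μ.prod Measure.count, q x) ↔ ∀ i, ∀ᵐ y ∂μ, q (y, i) := by
  simp only [ae_iff]
  have hslice : ∀ i, μ {y | ¬q (y, i)} = μ.prod Measure.count ({y | ¬q (y, i)} ×ˢ {i}) := by
    intro i
    rw [Measure.prod_prod, Measure.count_singleton, mul_one]
  refine ⟨fun h i => (hslice i).trans (measure_mono_null ?_ h), fun h => ?_⟩
  · rintro ⟨y, k⟩ ⟨hy, rfl⟩
    exact hy
  · have hcover : {x | ¬q x} ⊆ ⋃ i, {y | ¬q (y, i)} ×ˢ {i} := fun x hx =>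
      Set.mem_iUnion.2 ⟨x.2, hx, rfl⟩
    exact measure_mono_null hcover (measure_iUnion_null fun i => (hslice i).symm.trans (h i))

theorem lintegral_lintegral_eq_zero_of_ae_prod {α β : Type*} [MeasurableSpace α]
    [MeasurableSpace β] {μ : Measure α} {ν : Measure β} [SFinite ν] {f : α → β → ℝ≥0∞}
    (h : ∀ᵐ z ∂μ.prod ν, f z.1 z.2 = 0) : ∫⁻ a, ∫⁻ b, f a b ∂ν ∂μ = 0 :=
  lintegral_eq_zero_of_ae_eq_zero <| (Measure.ae_ae_of_ae_prod h).mono fun _ ha =>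
    (lintegral_congr_ae ha).trans lintegral_zero

end MeasureTheory

theorem ae_Ptrans_eq_zero {Y I' Θ : Type*} [MeasurableSpace Y] [Fintype I']
    [MeasurableSpace I'] [MeasurableSingletonClass I'] [MeasurableSpace Θ]
    {ℓ : Measure Y} [SFinite ℓ] {ϑ : Measure Θ} [SFinite ϑ] {S : I' → ℝ → Y → Y}
    {w : Θ → Y → Y} (Λ : ℝ) (p : Θ → Y → ℝ) (π' : I' → I' → Y → ℝ) (hS : ∀ i, Measurable fun q : ℝ × Y => S i q.1 q.2)
    (hw : Measurable fun q : Θ × Y => w q.1 q.2)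
    (hwS : ∀ i θ t, 0 < t → Measure.QuasiMeasurePreserving (fun y => w θ (S i t y)) ℓ ℓ)
    {A : Set (Y × I')} (hA : MeasurableSet A) (hA0 : ℓ.prod Measure.count A = 0) (i : I') :
    ∀ᵐ y ∂ℓ, Ptrans ϑ Λ S w p π' (y, i) A = 0 := by
  set ν := ϑ.prod (volume.restrict (Set.Ioi (0 : ℝ)))
  have hslice : ∀ j, ℓ ((·, j) ⁻¹' A) = 0 := fun j =>
    measure_eq_zero_iff_ae_notMem.2 <|
      (ae_prod_count_iff ℓ).1 (measure_eq_zero_iff_ae_notMem.1 hA0) j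
  have hpos : ∀ᵐ z ∂ν, 0 < z.2 :=
    Measure.quasiMeasurePreserving_snd.ae (ae_restrict_mem measurableSet_Ioi)
  have hjump : ∀ j, ∀ᵐ y ∂ℓ, ∀ᵐ z ∂ν, (w z.1 (S i z.2 y), j) ∉ A := by
    intro j
    have hmeas : MeasurableSet {q : Y × (Θ × ℝ) | (w q.2.1 (S i q.2.2 q.1), j) ∉ A} :=
      (hA.preimage ((hw.comp (measurable_snd.fst.prodMk ((hS i).comp
        (measurable_snd.snd.prodMk measurable_fst)))).prodMk measurable_const)).compl
    refine (Measure.ae_ae_comm hmeas).2 (hpos.mono fun z hz => ?_)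
    exact measure_eq_zero_iff_ae_notMem.1 ((hwS i z.1 z.2 hz).preimage_null (hslice j))
  filter_upwards [ae_all_iff.2 hjump] with y hy
  refine Finset.sum_eq_zero fun j _ => lintegral_lintegral_eq_zero_of_ae_prod ?_
  filter_upwards [hy j] with z hz
  simp [Set.indicator_of_notMem hz]

theorem lem_4_1_general
    {d N : ℕ}
    {Θ : Type*} [MeasurableSpace Θ] (ϑ : Measure Θ) [IsFiniteMeasure ϑ]
    (Λ : ℝ)
    (S : Fin N → ℝ → EuclideanSpace ℝ (Fin d) → EuclideanSpace ℝ (Fin d))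
    (w : Θ → EuclideanSpace ℝ (Fin d) → EuclideanSpace ℝ (Fin d))
    (p : Θ → EuclideanSpace ℝ (Fin d) → ℝ)
    (π' : Fin N → Fin N → EuclideanSpace ℝ (Fin d) → ℝ)
    (hS_meas : ∀ i, Measurable (fun q : ℝ × EuclideanSpace ℝ (Fin d) => S i q.1 q.2))
    (hw_meas : Measurable (fun q : Θ × EuclideanSpace ℝ (Fin d) => w q.1 q.2))
    -- nonsingularity assumption
    (hw_ns : ∀ θ, (volume : Measure (EuclideanSpace ℝ (Fin d))).map (w θ) ≪ volume)
    (hS_ns : ∀ i, ∀ t : ℝ, 0 ≤ t →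
      (volume : Measure (EuclideanSpace ℝ (Fin d))).map (S i t) ≪ volume)
    -- an absolutely continuous finite measure
    (μ : Measure (EuclideanSpace ℝ (Fin d) × Fin N))
    (hμ : μ ≪ (volume : Measure (EuclideanSpace ℝ (Fin d))).prod Measure.count) :
    ∀ A : Set (EuclideanSpace ℝ (Fin d) × Fin N), MeasurableSet A →
      ((volume : Measure (EuclideanSpace ℝ (Fin d))).prod Measure.count) A = 0 →
      ∫⁻ x, Ptrans ϑ Λ S w p π' x A ∂μ = 0 := by
  intro A hA hA0
  have hwS : ∀ i θ t, 0 < t → Measure.QuasiMeasurePreserving (fun y => w θ (S i t y)) :=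
    fun i θ t ht => Measure.QuasiMeasurePreserving.comp (g := w θ)
      ⟨hw_meas.comp measurable_prodMk_left, hw_ns θ⟩
      ⟨(hS_meas i).comp measurable_prodMk_left, hS_ns i t ht.le⟩
  have hP : ∀ᵐ x ∂(volume : Measure (EuclideanSpace ℝ (Fin d))).prod Measure.count,
      Ptrans ϑ Λ S w p π' x A = 0 :=
    (ae_prod_count_iff volume).2
      (ae_Ptrans_eq_zero Λ p π' hS_meas hw_meas hwS hA hA0)
  exact lintegral_eq_zero_of_ae_eq_zero (hμ.ae_le hP)

/-- **Lemma 4.1.** Under the nonsingularity assumption, the Markov operator `P` of the chain of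
post-jump locations preserves absolute continuity with respect to `ℓ̄ = volume ⊗ count`:
if `μ ≪ ℓ̄` then `Pμ ≪ ℓ̄`, i.e. `∫⁻ x, P(x,A) ∂μ = 0` whenever `ℓ̄ A = 0`. -/
theorem lem_4_1
    {d N : ℕ} (hd : 0 < d) (hN : 0 < N)
    {Θ : Type*} [MeasurableSpace Θ] (ϑ : Measure Θ) [IsFiniteMeasure ϑ]
    (Λ : ℝ) (hΛ : 0 < Λ)
    (S : Fin N → ℝ → EuclideanSpace ℝ (Fin d) → EuclideanSpace ℝ (Fin d))
    (w : Θ → EuclideanSpace ℝ (Fin d) → EuclideanSpace ℝ (Fin d))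
    (p : Θ → EuclideanSpace ℝ (Fin d) → ℝ)
    (π' : Fin N → Fin N → EuclideanSpace ℝ (Fin d) → ℝ)
    (hS_meas : ∀ i, Measurable (fun q : ℝ × EuclideanSpace ℝ (Fin d) => S i q.1 q.2))
    (hw_meas : Measurable (fun q : Θ × EuclideanSpace ℝ (Fin d) => w q.1 q.2))
    (hp_meas : Measurable (fun q : Θ × EuclideanSpace ℝ (Fin d) => p q.1 q.2))
    (hπ_meas : ∀ i j, Measurable (π' i j))
    (hp_nonneg : ∀ θ y, 0 ≤ p θ y)
    (hp_int : ∀ y, ∫ θ, p θ y ∂ϑ = 1)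
    (hπ_nonneg : ∀ i j y, 0 ≤ π' i j y)
    (hπ_sum : ∀ i y, ∑ j, π' i j y = 1)
    -- nonsingularity assumption
    (hw_ns : ∀ θ, (volume : Measure (EuclideanSpace ℝ (Fin d))).map (w θ) ≪ volume)
    (hS_ns : ∀ i, ∀ t : ℝ, 0 ≤ t →
      (volume : Measure (EuclideanSpace ℝ (Fin d))).map (S i t) ≪ volume)
    -- an absolutely continuous finite measure
    (μ : Measure (EuclideanSpace ℝ (Fin d) × Fin N)) [IsFiniteMeasure μ]
    (hμ : μ ≪ (volume : Measure (EuclideanSpace ℝ (Fin d))).prod Measure.count) :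
    ∀ A : Set (EuclideanSpace ℝ (Fin d) × Fin N), MeasurableSet A →
      ((volume : Measure (EuclideanSpace ℝ (Fin d))).prod Measure.count) A = 0 →
      ∫⁻ x, Ptrans ϑ Λ S w p π' x A ∂μ = 0 :=
  lem_4_1_general ϑ Λ S w p π' hS_meas hw_meas hw_ns hS_ns μ hμ
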